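/- Let m₁, m₂ ∈ ℝ³ with ‖m₁‖ = ‖m₂‖ = 1, let G₁, G₂ be 3×3 real matrices, let β, β' ∈ (0,1), and let δ > 0. Then ‖G₁ − G₂‖_F² − ββ' ((m₁⊗m₁)G₁ − (m₂⊗m₂)G₂) : (G₁ − G₂) ≥ (1 − ββ'(1 + δ²)) ‖G₁ − G₂‖_F² − (ββ'/δ²) ‖G₁‖_F² ‖m₁ − m₂‖². -/

import Mathlib

noncomputable section
open scoped BigOperators

/-- Euclidean dot product on ℝ³. -/
def dot3 (a b : Fin 3 → ℝ) : ℝ := ∑ i, a i * b i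

/-- Euclidean norm on ℝ³. -/
def norm3 (a : Fin 3 → ℝ) : ℝ := Real.sqrt (dot3 a a)

/-- Cross product on ℝ³. -/
def cross3 (a b : Fin 3 → ℝ) : Fin 3 → ℝ :=
  ![a 1 * b 2 - a 2 * b 1, a 2 * b 0 - a 0 * b 2, a 0 * b 1 - a 1 * b 0]

/-- Frobenius inner product of 3×3 real matrices. -/
def mdot (A B : Matrix (Fin 3) (Fin 3) ℝ) : ℝ := ∑ i, ∑ j, A i j * B i j

/-- Frobenius norm of a 3×3 real matrix. -/
def fnorm (A : Matrix (Fin 3) (Fin 3) ℝ) : ℝ := Real.sqrt (mdot A A)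

lemma dot3_nonneg (a : Fin 3 → ℝ) : 0 ≤ dot3 a a := by
  simp only [dot3, Fin.sum_univ_three]
  nlinarith [sq_nonneg (a 0), sq_nonneg (a 1), sq_nonneg (a 2)]

lemma mdot_nonneg (A : Matrix (Fin 3) (Fin 3) ℝ) : 0 ≤ mdot A A := by
  simp only [mdot, Fin.sum_univ_three]
  nlinarith [sq_nonneg (A 0 0), sq_nonneg (A 0 1), sq_nonneg (A 0 2),
    sq_nonneg (A 1 0), sq_nonneg (A 1 1), sq_nonneg (A 1 2),
    sq_nonneg (A 2 0), sq_nonneg (A 2 1), sq_nonneg (A 2 2)]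

lemma fnorm_sq (A : Matrix (Fin 3) (Fin 3) ℝ) : fnorm A ^ 2 = mdot A A :=
  Real.sq_sqrt (mdot_nonneg A)

lemma norm3_sq (a : Fin 3 → ℝ) : norm3 a ^ 2 = dot3 a a :=
  Real.sq_sqrt (dot3_nonneg a)

lemma cs3 (a b : Fin 3 → ℝ) : (dot3 a b)^2 ≤ dot3 a a * dot3 b b := by
  simp only [dot3, Fin.sum_univ_three]
  nlinarith [sq_nonneg (a 0 * b 1 - a 1 * b 0), sq_nonneg (a 0 * b 2 - a 2 * b 0),
    sq_nonneg (a 1 * b 2 - a 2 * b 1)]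

lemma vecMul_sq (b : Fin 3 → ℝ) (G : Matrix (Fin 3) (Fin 3) ℝ) :
    dot3 (Matrix.vecMul b G) (Matrix.vecMul b G) ≤ dot3 b b * mdot G G := by
  simp only [dot3, mdot, Matrix.vecMul, dotProduct, Fin.sum_univ_three]
  nlinarith [sq_nonneg (b 0 * G 1 0 - b 1 * G 0 0), sq_nonneg (b 0 * G 2 0 - b 2 * G 0 0),
    sq_nonneg (b 1 * G 2 0 - b 2 * G 1 0),
    sq_nonneg (b 0 * G 1 1 - b 1 * G 0 1), sq_nonneg (b 0 * G 2 1 - b 2 * G 0 1),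
    sq_nonneg (b 1 * G 2 1 - b 2 * G 1 1),
    sq_nonneg (b 0 * G 1 2 - b 1 * G 0 2), sq_nonneg (b 0 * G 2 2 - b 2 * G 0 2),
    sq_nonneg (b 1 * G 2 2 - b 2 * G 1 2)]

lemma young (P Q T δ : ℝ) (hδ : 0 < δ) (hP : 0 ≤ P) (hQ : 0 ≤ Q) (hT : T^2 ≤ P*Q) :
    T ≤ P/(2*δ^2) + δ^2*Q/2 := by
  have h2 : 0 < δ^2 := by positivity
  have h3 : P/(2*δ^2) + δ^2*Q/2 = (P + δ^2*(δ^2*Q))/(2*δ^2) := by field_simp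
  rw [h3, le_div_iff₀ (by positivity)]
  by_contra hc
  push_neg at hc
  have h0 : 0 ≤ P + δ^2*(δ^2*Q) := by positivity
  have hsq : (P + δ^2*(δ^2*Q))^2 < (T*(2*δ^2))^2 := by
    have := mul_self_lt_mul_self h0 hc
    nlinarith [this]
  nlinarith [hT, mul_pos h2 h2, sq_nonneg (P - δ^2*(δ^2*Q)),
    mul_le_mul_of_nonneg_left hT (le_of_lt (mul_pos h2 h2))]

lemma decomp (m₁ m₂ : Fin 3 → ℝ) (G₁ G₂ : Matrix (Fin 3) (Fin 3) ℝ) :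
    mdot (Matrix.vecMulVec m₁ m₁ * G₁ - Matrix.vecMulVec m₂ m₂ * G₂) (G₁ - G₂)
      = dot3 (Matrix.vecMul (m₁ - m₂) G₁) (Matrix.vecMul m₁ (G₁ - G₂))
        + dot3 (Matrix.vecMul m₂ G₁) (Matrix.vecMul (m₁ - m₂) (G₁ - G₂))
        + dot3 (Matrix.vecMul m₂ (G₁ - G₂)) (Matrix.vecMul m₂ (G₁ - G₂)) := by
  simp only [dot3, mdot, Matrix.vecMul, Matrix.vecMulVec, Matrix.mul_apply,
    dotProduct, Matrix.sub_apply, Pi.sub_apply, Matrix.of_apply, Fin.sum_univ_three]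
  ring

/-- perturbed coercivity estimate at the core of the Lipschitz-type
bound for the solution operator of the stationary spin-diffusion equation. -/
theorem perturbed_coercivity_estimate
    (m₁ m₂ : Fin 3 → ℝ) (hm₁ : norm3 m₁ = 1) (hm₂ : norm3 m₂ = 1)
    (G₁ G₂ : Matrix (Fin 3) (Fin 3) ℝ)
    (β β' : ℝ) (hβ : β ∈ Set.Ioo (0:ℝ) 1) (hβ' : β' ∈ Set.Ioo (0:ℝ) 1)
    (δ : ℝ) (hδ : 0 < δ) :
    (1 - β * β' * (1 + δ ^ 2)) * fnorm (G₁ - G₂) ^ 2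
        - (β * β' / δ ^ 2) * fnorm G₁ ^ 2 * norm3 (m₁ - m₂) ^ 2
      ≤ fnorm (G₁ - G₂) ^ 2
        - β * β' * mdot (Matrix.vecMulVec m₁ m₁ * G₁
            - Matrix.vecMulVec m₂ m₂ * G₂) (G₁ - G₂) := by
  have hββ : 0 < β * β' := mul_pos hβ.1 hβ'.1
  have hm1 : dot3 m₁ m₁ = 1 := by rw [← norm3_sq, hm₁]; norm_num
  have hm2 : dot3 m₂ m₂ = 1 := by rw [← norm3_sq, hm₂]; norm_num
  set d := m₁ - m₂ with hd
  set E := G₁ - G₂ with hE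
  set P := dot3 d d * mdot G₁ G₁ with hP
  set Q := mdot E E with hQ
  have hPnn : 0 ≤ P := mul_nonneg (dot3_nonneg d) (mdot_nonneg G₁)
  have hQnn : 0 ≤ Q := mdot_nonneg E
  -- term bounds
  have hvv : dot3 (Matrix.vecMul m₁ E) (Matrix.vecMul m₁ E) ≤ Q := by
    have := vecMul_sq m₁ E; rwa [hm1, one_mul] at this
  have hvv2 : dot3 (Matrix.vecMul m₂ G₁) (Matrix.vecMul m₂ G₁) ≤ mdot G₁ G₁ := by
    have := vecMul_sq m₂ G₁; rwa [hm2, one_mul] at this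
  have hT3 : dot3 (Matrix.vecMul m₂ E) (Matrix.vecMul m₂ E) ≤ Q := by
    have := vecMul_sq m₂ E; rwa [hm2, one_mul] at this
  have h1 : (dot3 (Matrix.vecMul d G₁) (Matrix.vecMul m₁ E))^2 ≤ P * Q := by
    refine le_trans (cs3 _ _) ?_
    exact mul_le_mul (vecMul_sq d G₁) hvv (dot3_nonneg _) hPnn
  have h2 : (dot3 (Matrix.vecMul m₂ G₁) (Matrix.vecMul d E))^2 ≤ P * Q := by
    refine le_trans (cs3 _ _) ?_
    calc dot3 (Matrix.vecMul m₂ G₁) (Matrix.vecMul m₂ G₁)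
          * dot3 (Matrix.vecMul d E) (Matrix.vecMul d E)
        ≤ mdot G₁ G₁ * (dot3 d d * Q) :=
          mul_le_mul hvv2 (vecMul_sq d E) (dot3_nonneg _) (mdot_nonneg G₁)
      _ = P * Q := by rw [hP]; ring
  have hy1 := young P Q _ δ hδ hPnn hQnn h1
  have hy2 := young P Q _ δ hδ hPnn hQnn h2
  have hdec := decomp m₁ m₂ G₁ G₂
  rw [← hd, ← hE] at hdec
  have hsum : mdot (Matrix.vecMulVec m₁ m₁ * G₁ - Matrix.vecMulVec m₂ m₂ * G₂) E
      ≤ P/δ^2 + δ^2*Q + Q := by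
    rw [hdec]
    have e : P/(2*δ^2) + P/(2*δ^2) = P/δ^2 := by ring
    linarith
  rw [fnorm_sq E, fnorm_sq G₁, norm3_sq d]
  have key := mul_le_mul_of_nonneg_left hsum (le_of_lt hββ)
  have e2 : (β * β' / δ ^ 2) * mdot G₁ G₁ * dot3 d d = β * β' * (P/δ^2) := by
    rw [hP]; ring
  linarith [key, e2, hQ]
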